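/- The Černý automaton C_n with n states 0,...,n−1 and two letters a, b, where a maps state 0 to 1 and fixes all other states, and b maps each state i to i+1 mod n, has a synchronizing word of length (n−1)². -/

import Mathlib

inductive Letter : Type
  | a : Letter
  | b : Letter
deriving DecidableEq

def cernyStep (n : ℕ) : ZMod n → Letter → ZMod n
  | i, Letter.a => if i = 0 then 1 else i
  | i, Letter.b => i + 1

/-!
Represent a state by a natural number `m < n`. The letter `a` maps `m` to `max m 1`, so after
an initial `a` every state lies in `{1, …, n - 1}`. There, the round `b^(n-1) a` maps `m` to
`max (m - 1) 1`: the `b`s rotate `m` back to `m - 1`, and `a` only moves the state `0`.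
Hence `n - 2` rounds bring every state to `1`, and `a (b^(n-1) a)^(n-2)` has length
`1 + n (n - 2) = (n - 1)²`.
-/

namespace Cerny

def roundWord (n : ℕ) : List Letter := List.replicate (n - 1) Letter.b ++ [Letter.a]

def syncWord (n : ℕ) : List Letter := Letter.a :: (List.replicate (n - 2) (roundWord n)).flatten

lemma length_syncWord {n : ℕ} (hn : 2 ≤ n) : (syncWord n).length = (n - 1) ^ 2 := by
  obtain ⟨k, rfl⟩ := Nat.exists_eq_add_of_le hn
  simp only [syncWord, roundWord, List.length_cons, List.length_flatten, List.map_replicate,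
    List.length_append, List.length_replicate, List.sum_replicate, List.length_nil,
    smul_eq_mul]
  rw [show 2 + k - 1 = k + 1 by omega, show 2 + k - 2 = k by omega]
  ring

lemma foldl_replicate_b (n j : ℕ) (p : ZMod n) :
    (List.replicate j Letter.b).foldl (cernyStep n) p = p + j := by
  induction j generalizing p with
  | zero => simp
  | succ j ih =>
    rw [List.replicate_succ, List.foldl_cons, ih, Nat.cast_succ, add_comm (j : ZMod n) 1,
      ← add_assoc]
    rfl

lemma cernyStep_natCast_a {n m : ℕ} (hm : m < n) :
    cernyStep n (m : ZMod n) Letter.a = ((max m 1 : ℕ) : ZMod n) := by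
  rcases Nat.eq_zero_or_pos m with rfl | hm0
  · simp [cernyStep]
  · have hne : (m : ZMod n) ≠ 0 := by
      rw [Ne, ZMod.natCast_eq_zero_iff]
      exact Nat.not_dvd_of_pos_of_lt hm0 hm
    simp [cernyStep, hne, max_eq_left (Nat.succ_le_of_lt hm0)]

lemma foldl_roundWord {n m : ℕ} (hm : 1 ≤ m) (hmn : m < n) :
    (roundWord n).foldl (cernyStep n) (m : ZMod n) = ((max (m - 1) 1 : ℕ) : ZMod n) := by
  have hrotate : (m : ZMod n) + ((n - 1 : ℕ) : ZMod n) = ((m - 1 : ℕ) : ZMod n) := by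
    rw [← Nat.cast_add, show m + (n - 1) = m - 1 + n by omega, Nat.cast_add, ZMod.natCast_self,
      add_zero]
  rw [roundWord, List.foldl_append, foldl_replicate_b, hrotate, List.foldl_cons, List.foldl_nil,
    cernyStep_natCast_a (by omega)]

lemma foldl_replicate_roundWord {n : ℕ} (k : ℕ) {m : ℕ} (hm : 1 ≤ m) (hmn : m < n) :
    (List.replicate k (roundWord n)).flatten.foldl (cernyStep n) (m : ZMod n) =
      ((max (m - k) 1 : ℕ) : ZMod n) := by
  induction k generalizing m with
  | zero =>
    rw [List.replicate_zero, List.flatten_nil, List.foldl_nil, Nat.sub_zero, max_eq_left hm]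
  | succ k ih =>
    rw [List.replicate_succ, List.flatten_cons, List.foldl_append, foldl_roundWord hm hmn,
      ih (by omega) (by omega)]
    congr 1
    omega

lemma foldl_syncWord {n : ℕ} (hn : 2 ≤ n) (p : ZMod n) :
    (syncWord n).foldl (cernyStep n) p = 1 := by
  have : NeZero n := ⟨by omega⟩
  rw [← ZMod.natCast_zmod_val p, syncWord, List.foldl_cons, cernyStep_natCast_a p.val_lt,
    foldl_replicate_roundWord _ (le_max_right _ _) (max_lt p.val_lt (by omega))]
  have hsettled : max (max p.val 1 - (n - 2)) 1 = 1 := by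
    have := p.val_lt
    omega
  rw [hsettled, Nat.cast_one]

end Cerny

/-- The Černý automaton `C n` has a synchronizing word of length `(n-1)^2`. -/
theorem stmt5 (n : ℕ) (hn : 2 ≤ n) :
    ∃ w : List Letter, w.length = (n - 1) ^ 2 ∧
      ∃ q0 : ZMod n, ∀ p : ZMod n, w.foldl (cernyStep n) p = q0 :=
  ⟨Cerny.syncWord n, Cerny.length_syncWord hn, 1, Cerny.foldl_syncWord hn⟩
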